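/- Let a, b, c, d be positive integers with b ≥ 2, c ≥ 2 and bc > ad. If (i, j) ∈ ℕ² satisfies b·i + a·j > b·(a−1) + a·(d−1), then the monomial x^i y^j belongs to the ideal of ℂ[[x,y]] generated by x^a + y^b and x^c + y^d. -/

import Mathlib

/-!
Modulo `I = (x^a + y^b, x^c + y^d)` we may trade `x^a` for `-y^b`, which preserves the weight
`b i + a j`, and `y^d` for `-x^c`, which raises it by `bc - ad > 0`. Chaining the two relations
gives `x^(ad) ≡ ± x^(bc)`, i.e. `x^(ad) (1 ∓ x^(bc - ad)) ∈ I`, and the second factor is a unit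
because `x` lies in the Jacobson radical; hence `x^(ad) ∈ I` and then `y^(bd) ∈ I`. A monomial
outside the rectangle `i < a, j < d` can always be rewritten by one of the two trades, and
iterating (lexicographically on decreasing `2abd - weight`, then on decreasing `i`) must end at a
multiple of `x^(ad)` or `y^(bd)`, since monomials avoiding both have weight below `2abd`.
-/

open MvPowerSeries

theorem MvPowerSeries.X_mem_jacobson {σ R : Type*} [CommRing R] (s : σ) :
    X s ∈ Ring.jacobson (MvPowerSeries σ R) := by
  rw [← Ideal.jacobson_bot, Ideal.mem_jacobson_bot]
  intro f
  simp [MvPowerSeries.isUnit_iff_constantCoeff]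

section

variable {S : Type*} [CommRing S] {X Y : S} {a b c d : ℕ}

theorem pow_mul_pow_add_eq_neg {m n : ℕ} (h : X ^ m + Y ^ n = 0) (p q : ℕ) :
    X ^ p * Y ^ (q + n) = -(X ^ (p + m) * Y ^ q) := by
  rw [pow_add, eq_neg_of_add_eq_zero_right h, pow_add]
  ring

theorem pow_mul_eq_neg_one_pow_mul_pow_mul (hab : X ^ a + Y ^ b = 0) (hcd : X ^ c + Y ^ d = 0) :
    X ^ (a * d) = (-1) ^ (b + d) * X ^ (b * c) :=
  calc X ^ (a * d) = (-Y ^ b) ^ d := by rw [pow_mul, eq_neg_of_add_eq_zero_left hab]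
    _ = (-1) ^ d * (Y ^ d) ^ b := by rw [neg_pow, ← pow_mul, ← pow_mul, mul_comm b d]
    _ = (-1) ^ (b + d) * X ^ (b * c) := by
      rw [eq_neg_of_add_eq_zero_right hcd, neg_pow (X ^ c), ← pow_mul, mul_comm c b, pow_add]
      ring

theorem pow_mul_eq_zero_of_mem_jacobson (hX : X ∈ Ring.jacobson S) (hab : X ^ a + Y ^ b = 0)
    (hcd : X ^ c + Y ^ d = 0) (h : a * d < b * c) : X ^ (a * d) = 0 := by
  obtain ⟨e, he⟩ := Nat.exists_eq_add_of_lt h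
  have hXe : X ^ (e + 1) ∈ Ideal.jacobson ⊥ :=
    Ideal.jacobson_bot (R := S) ▸ Ideal.pow_mem_of_mem _ hX _ e.succ_pos
  have hunit : IsUnit (1 - (-1) ^ (b + d) * X ^ (e + 1)) := by
    convert Ideal.mem_jacobson_bot.1 hXe (-(-1) ^ (b + d)) using 1
    ring
  refine hunit.mul_left_eq_zero.1 ?_
  rw [mul_sub, mul_one, mul_left_comm, ← pow_add, ← add_assoc, ← he]
  exact sub_eq_zero.2 (pow_mul_eq_neg_one_pow_mul_pow_mul hab hcd)

theorem pow_mul_pow_eq_zero_of_weight_lt (hab : X ^ a + Y ^ b = 0) (hcd : X ^ c + Y ^ d = 0)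
    (hX : X ^ (a * d) = 0) (hY : Y ^ (b * d) = 0) (h : a * d < b * c) (i j : ℕ)
    (hw : b * (a - 1) + a * (d - 1) < b * i + a * j) : X ^ i * Y ^ j = 0 := by
  by_cases hi : a * d ≤ i
  · rw [← Nat.sub_add_cancel hi, pow_add, hX, mul_zero, zero_mul]
  by_cases hj : b * d ≤ j
  · rw [← Nat.sub_add_cancel hj, pow_add, hY, mul_zero, mul_zero]
  have hbound : b * i + a * j < 2 * a * b * d := by nlinarith
  by_cases hdj : d ≤ j
  · obtain ⟨j, rfl⟩ := Nat.exists_eq_add_of_le' hdj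
    rw [pow_mul_pow_add_eq_neg hcd,
      pow_mul_pow_eq_zero_of_weight_lt hab hcd hX hY h (i + c) j (by nlinarith), neg_zero]
  · have hai : a ≤ i := by
      by_contra hia
      have : b * i ≤ b * (a - 1) := Nat.mul_le_mul_left b (by omega)
      have : a * j ≤ a * (d - 1) := Nat.mul_le_mul_left a (by omega)
      omega
    obtain ⟨i, rfl⟩ := Nat.exists_eq_add_of_le' hai
    have ha : 0 < a := Nat.pos_of_ne_zero (by rintro rfl; simp at hi)
    rw [mul_comm, pow_mul_pow_add_eq_neg ((add_comm _ _).trans hab), mul_comm,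
      pow_mul_pow_eq_zero_of_weight_lt hab hcd hX hY h i (j + b) (by nlinarith), neg_zero]
termination_by (2 * a * b * d - (b * i + a * j), i)
decreasing_by
  all_goals subst_vars; rw [Prod.lex_def]; dsimp only
  · exact Or.inl (Nat.sub_lt_sub_left hbound (by nlinarith))
  · exact Or.inr ⟨by ring_nf, Nat.lt_add_of_pos_right ha⟩

theorem pow_mul_pow_eq_zero_of_mem_jacobson (hX : X ∈ Ring.jacobson S) (hab : X ^ a + Y ^ b = 0)
    (hcd : X ^ c + Y ^ d = 0) (h : a * d < b * c) (i j : ℕ)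
    (hw : b * (a - 1) + a * (d - 1) < b * i + a * j) : X ^ i * Y ^ j = 0 := by
  have hXad := pow_mul_eq_zero_of_mem_jacobson hX hab hcd h
  have hYbd : Y ^ (b * d) = 0 := by
    rw [pow_mul, eq_neg_of_add_eq_zero_right hab, neg_pow, ← pow_mul, hXad, mul_zero]
  exact pow_mul_pow_eq_zero_of_weight_lt hab hcd hXad hYbd h i j hw

end

theorem stmt_3_general (a b c d : ℕ) (h : a * d < b * c) (i j : ℕ)
    (hw : b * (a - 1) + a * (d - 1) < b * i + a * j) :
    (X 0 : MvPowerSeries (Fin 2) ℂ) ^ i * X 1 ^ j ∈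
      Ideal.span ({X 0 ^ a + X 1 ^ b, X 0 ^ c + X 1 ^ d} :
        Set (MvPowerSeries (Fin 2) ℂ)) := by
  rw [← Ideal.Quotient.eq_zero_iff_mem, map_mul, map_pow, map_pow]
  refine pow_mul_pow_eq_zero_of_mem_jacobson
    (Ring.le_comap_jacobson (Ideal.Quotient.mk _) (X_mem_jacobson 0)) ?_ ?_ h i j hw
  all_goals
    rw [← map_pow, ← map_pow, ← map_add, Ideal.Quotient.eq_zero_iff_mem]
    exact Ideal.subset_span (by simp)

theorem stmt_3 (a b c d : ℕ) (ha : 0 < a) (hd : 0 < d) (hb : 2 ≤ b) (hc : 2 ≤ c)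
    (h : a * d < b * c) (i j : ℕ) (hw : b * (a - 1) + a * (d - 1) < b * i + a * j) :
    (X 0 : MvPowerSeries (Fin 2) ℂ) ^ i * X 1 ^ j ∈
      Ideal.span ({X 0 ^ a + X 1 ^ b, X 0 ^ c + X 1 ^ d} :
        Set (MvPowerSeries (Fin 2) ℂ)) :=
  stmt_3_general a b c d h i j hw
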